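/- In the minimal tree realization M(C; T, ω), for every vertex v and every edge e incident with v: dim(S*_e) ≤ dim(C*_v) ≤ dim(C|_{ω^{-1}(v)}) + ∑_{e' ∈ E(v), e' ≠ e} dim(S*_{e'}). -/

import Mathlib

open Module

open scoped Classical

/-- The submodule of vectors in `F^I` supported inside `J` (vanishing outside `J`). -/
def suppSub (F : Type*) [Field F] {I : Type*} (J : Set I) : Submodule F (I → F) where
  carrier := {x | ∀ i ∉ J, x i = 0}
  add_mem' := by
    intro a b ha hb i hi
    show a i + b i = 0
    rw [ha i hi, hb i hi, add_zero]
  zero_mem' := fun i _ => rfl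
  smul_mem' := by
    intro c a ha i hi
    show c • a i = 0
    rw [ha i hi, smul_zero]

variable {F : Type*} [Field F] {I V : Type*} [Fintype I] [Fintype V]

/-- The projection `C|_J` of a code `C ⊆ F^I` onto the coordinates in `J`. -/
noncomputable def projCode (C : Submodule F (I → F)) (J : Set I) : Submodule F (↥J → F) :=
  C.map (LinearMap.funLeft F F (Subtype.val : ↥J → I))

/-- The cross-section `C_J = {c|_J : c ∈ C, c|_{I∖J} = 0}`. -/
noncomputable def crossCode (C : Submodule F (I → F)) (J : Set I) : Submodule F (↥J → F) :=
  (C ⊓ suppSub F J).map (LinearMap.funLeft F F (Subtype.val : ↥J → I))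

/-- For adjacent vertices `v, w`, the index set `J(e)` carried by the component of
`T − e` containing `w` (i.e., not containing `v`), for the edge `e = {v,w}`. -/
def edgeIndexSet (G : SimpleGraph V) (ω : I → V) (v w : V) : Set I :=
  ω ⁻¹' {z | (G.deleteEdges {s(v, w)}).Reachable z w}

/-- The subspace `C_{J(e)} ⊕ C_{J̄(e)}` of `C` (as a submodule of `↥C`), for the
edge `e = {v,w}`. -/
noncomputable def edgeSub (G : SimpleGraph V) (ω : I → V) (C : Submodule F (I → F))
    (v w : V) : Submodule F ↥C :=
  ((C ⊓ suppSub F (edgeIndexSet G ω v w)) ⊔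
    (C ⊓ suppSub F (edgeIndexSet G ω v w)ᶜ)).comap C.subtype


section InstanceHelpers

variable (C : Submodule F (I → F)) {A B : Type*} (N : A → Submodule F ↥C)

noncomputable instance submoduleQuotPiAddCommGroup
    (P : Submodule F ((B → F) × ((a : A) → ↥C ⧸ N a))) : AddCommGroup ↥P :=
  letI m1 : AddCommGroup ((B → F) × ((a : A) → ↥C ⧸ N a)) := inferInstance
  letI m2 : Module F ((B → F) × ((a : A) → ↥C ⧸ N a)) := inferInstance
  Submodule.addCommGroup P

noncomputable instance submoduleQuotPiModule
    (P : Submodule F ((B → F) × ((a : A) → ↥C ⧸ N a))) : Module F ↥P :=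
  letI m1 : AddCommGroup ((B → F) × ((a : A) → ↥C ⧸ N a)) := inferInstance
  letI m2 : Module F ((B → F) × ((a : A) → ↥C ⧸ N a)) := inferInstance
  Submodule.module P

end InstanceHelpers

/-- The map realizing the minimal local constraint code `C*_v`:
`c ↦ (c|_{ω⁻¹(v)}, (s*_e(c))_{e ∈ E(v)})`, where incident edges are parametrized by the
neighbors `w` of `v` and `s*_e : C → C/(C_{J(e)} ⊕ C_{J̄(e)})` is the quotient map. -/
noncomputable def cStarMap (G : SimpleGraph V) (ω : I → V) (C : Submodule F (I → F))
    (v : V) :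
    ↥C →ₗ[F] ((↥(ω ⁻¹' {v}) → F) ×
      ((w : ↥(G.neighborSet v)) → (↥C ⧸ edgeSub G ω C v w.val))) :=
  LinearMap.prod
    ((LinearMap.funLeft F F Subtype.val).comp C.subtype)
    (LinearMap.pi (fun w => (edgeSub G ω C v w.val).mkQ))

/-- The minimal local constraint code `C*_v`. -/
noncomputable def cStar (G : SimpleGraph V) (ω : I → V) (C : Submodule F (I → F))
    (v : V) :=
  LinearMap.range (cStarMap G ω C v)

/-! In a tree, the branches at `v` partition the coordinates off `ω⁻¹(v)`, so a codeword
vanishing on `ω⁻¹(v)` is the sum of its restrictions to the branches. Hence if it splits along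
every edge at `v` except `e`, it splits along `e` as well: the kernel of
`c ↦ (c|_{ω⁻¹(v)}, (s*_{e'}(c))_{e' ≠ e})` is already contained in the kernel of `C → C*_v`.
The upper bound follows by rank–nullity, since each condition `c ∈ C_{J(e')} ⊕ C_{J̄(e')}` has
codimension `dim S*_{e'}`. The lower bound holds because `C → S*_e` factors through `C → C*_v`. -/

theorem Submodule.finrank_le_finrank_inf_finsetInf_add_sum {K M : Type*} [DivisionRing K]
    [AddCommGroup M] [Module K M] [FiniteDimensional K M] {α : Type*} (P : Submodule K M)
    (s : Finset α) (Q : α → Submodule K M) :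
    finrank K P ≤ finrank K ↥(P ⊓ s.inf Q) + ∑ a ∈ s, finrank K (M ⧸ Q a) := by
  induction s using Finset.induction_on with
  | empty => rw [Finset.inf_empty, inf_top_eq, Finset.sum_empty, add_zero]
  | @insert a s ha ih =>
    rw [Finset.inf_insert, Finset.sum_insert ha, inf_left_comm]
    have hsup := Submodule.finrank_sup_add_finrank_inf_eq (Q a) (P ⊓ s.inf Q)
    have hquot := Submodule.finrank_quotient_add_finrank (Q a)
    have hle := Submodule.finrank_le (Q a ⊔ P ⊓ s.inf Q)
    omega

namespace SimpleGraph.IsTree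

variable {V : Type*} {G : SimpleGraph V} {v w z : V}

theorem not_reachable_deleteEdges_of_adj (hT : G.IsTree) (h : G.Adj v w) :
    ¬ (G.deleteEdges {s(v, w)}).Reachable v w :=
  isBridge_iff.mp (isAcyclic_iff_forall_adj_isBridge.mp hT.isAcyclic h)

theorem eq_of_reachable_deleteEdges {w₁ w₂ : V} (hT : G.IsTree) (h₁ : G.Adj v w₁)
    (h₂ : G.Adj v w₂) (r₁ : (G.deleteEdges {s(v, w₁)}).Reachable z w₁)
    (r₂ : (G.deleteEdges {s(v, w₂)}).Reachable z w₂) : w₁ = w₂ := by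
  by_contra hne
  obtain ⟨p, hp⟩ := reachable_deleteEdges_iff_exists_walk.mp r₂
  obtain ⟨q, hq⟩ := reachable_deleteEdges_iff_exists_walk.mp r₁
  have hv : v ∉ p.support := fun hv => hT.not_reachable_deleteEdges_of_adj h₂ <|
    reachable_deleteEdges_iff_exists_walk.mpr
      ⟨p.dropUntil v hv, fun he => hp (p.edges_dropUntil_subset_edges hv he)⟩
  -- the walk `v → w₂ ⇝ z ⇝ w₁` avoids the bridge `s(v, w₁)`
  refine hT.not_reachable_deleteEdges_of_adj h₁ <| reachable_deleteEdges_iff_exists_walk.mpr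
    ⟨Walk.cons h₂ (p.reverse.append q), ?_⟩
  simp only [Walk.edges_cons, Walk.edges_append, Walk.edges_reverse, List.mem_cons,
    List.mem_append, List.mem_reverse, not_or]
  exact ⟨mt Sym2.congr_right.mp hne, fun he => hv (p.fst_mem_support_of_mem_edges he), hq⟩

theorem exists_adj_reachable_deleteEdges (hT : G.IsTree) (hz : z ≠ v) :
    ∃ w, G.Adj v w ∧ (G.deleteEdges {s(v, w)}).Reachable z w := by
  obtain ⟨p, hp⟩ := (hT.connected.preconnected v z).some.toPath
  cases p with
  | nil => exact absurd rfl hz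
  | @cons _ w _ h q =>
    rw [Walk.cons_isPath_iff] at hp
    refine ⟨w, h, reachable_deleteEdges_iff_exists_walk.mpr ⟨q.reverse, fun he => hp.2 ?_⟩⟩
    exact q.fst_mem_support_of_mem_edges (by simpa using he)

end SimpleGraph.IsTree

section EdgeIndexSet

variable {I V : Type*} {G : SimpleGraph V} {ω : I → V} {v : V}

theorem ne_of_mem_edgeIndexSet (hT : G.IsTree) {w : V} (h : G.Adj v w) {i : I}
    (hi : i ∈ edgeIndexSet G ω v w) : ω i ≠ v :=
  fun hv => hT.not_reachable_deleteEdges_of_adj h (hv ▸ hi)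

theorem pairwiseDisjoint_edgeIndexSet (hT : G.IsTree) (s : Set (G.neighborSet v)) :
    s.PairwiseDisjoint (fun w => edgeIndexSet G ω v w) :=
  fun w₁ _ w₂ _ hne => Set.disjoint_left.mpr fun _ r₁ r₂ =>
    hne (Subtype.ext (hT.eq_of_reachable_deleteEdges w₁.2 w₂.2 r₁ r₂))

theorem iUnion_edgeIndexSet (hT : G.IsTree) :
    ⋃ w : G.neighborSet v, edgeIndexSet G ω v w = (ω ⁻¹' {v})ᶜ := by
  ext i
  simp only [Set.mem_iUnion, Set.mem_compl_iff, Set.mem_preimage, Set.mem_singleton_iff]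
  constructor
  · rintro ⟨w, hi⟩
    exact ne_of_mem_edgeIndexSet hT w.2 hi
  · intro hi
    obtain ⟨w, h, hw⟩ := hT.exists_adj_reachable_deleteEdges hi
    exact ⟨⟨w, h⟩, hw⟩

theorem sum_indicator_edgeIndexSet [Fintype V] {M : Type*} [AddCommMonoid M] (hT : G.IsTree)
    {x : I → M} (hx : ∀ i, ω i = v → x i = 0) :
    ∑ w : G.neighborSet v, (edgeIndexSet G ω v w).indicator x = x := by
  ext i
  rw [Finset.sum_apply, ← Finset.indicator_biUnion_apply _ _
    (pairwiseDisjoint_edgeIndexSet hT _)]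
  simp only [Finset.mem_univ, Set.iUnion_true, iUnion_edgeIndexSet hT]
  by_cases hi : ω i = v
  · rw [Set.indicator_of_notMem (by simpa using hi), hx i hi]
  · exact Set.indicator_of_mem hi x

end EdgeIndexSet

section Codes

variable {I V : Type*}

theorem indicator_mem_suppSub (J : Set I) (x : I → F) : J.indicator x ∈ suppSub F J :=
  fun _ hi => Set.indicator_of_notMem hi x

theorem mem_sup_inf_suppSub_iff {C : Submodule F (I → F)} {J : Set I} {x : I → F}
    (hx : x ∈ C) : x ∈ C ⊓ suppSub F J ⊔ C ⊓ suppSub F Jᶜ ↔ J.indicator x ∈ C := by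
  constructor
  · intro h
    obtain ⟨y, ⟨hyC, hyJ⟩, z, ⟨-, hzJ⟩, rfl⟩ := Submodule.mem_sup.mp h
    have hyz : J.indicator (y + z) = y := funext fun i => by
      by_cases hi : i ∈ J
      · simp [hi, hzJ i (Set.notMem_compl_iff.mpr hi)]
      · simp [hi, hyJ i hi]
    rwa [hyz]
  · intro h
    refine Submodule.mem_sup.mpr ⟨J.indicator x, ⟨h, indicator_mem_suppSub J x⟩,
      Jᶜ.indicator x, ⟨?_, indicator_mem_suppSub Jᶜ x⟩, Set.indicator_self_add_compl J x⟩
    rw [Set.indicator_compl]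
    exact C.sub_mem hx h

theorem mem_edgeSub_iff {G : SimpleGraph V} {ω : I → V} {C : Submodule F (I → F)} {v w : V}
    {x : ↥C} : x ∈ edgeSub G ω C v w ↔ (edgeIndexSet G ω v w).indicator (x : I → F) ∈ C :=
  mem_sup_inf_suppSub_iff x.2

noncomputable def codeRestrict (C : Submodule F (I → F)) (J : Set I) : ↥C →ₗ[F] (↥J → F) :=
  (LinearMap.funLeft F F Subtype.val).comp C.subtype

theorem range_codeRestrict (C : Submodule F (I → F)) (J : Set I) :
    LinearMap.range (codeRestrict C J) = projCode C J := by
  rw [codeRestrict, LinearMap.range_comp, Submodule.range_subtype, projCode]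

theorem mem_ker_codeRestrict {C : Submodule F (I → F)} {J : Set I} {x : ↥C} :
    x ∈ LinearMap.ker (codeRestrict C J) ↔ ∀ i ∈ J, (x : I → F) i = 0 := by
  simp [codeRestrict, funext_iff, LinearMap.funLeft]

theorem finrank_cStar_add_finrank_ker_cStarMap [Finite I] (G : SimpleGraph V) (ω : I → V)
    (C : Submodule F (I → F)) (v : V) :
    finrank F ↥(cStar G ω C v) + finrank F (LinearMap.ker (cStarMap G ω C v)) =
      finrank F ↥C := by
  have h := (cStarMap G ω C v).rangeRestrict.finrank_range_add_finrank_ker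
  rwa [LinearMap.range_rangeRestrict, LinearMap.ker_rangeRestrict, finrank_top] at h

variable {G : SimpleGraph V} {ω : I → V} {C : Submodule F (I → F)} {v : V}

theorem ker_cStarMap :
    LinearMap.ker (cStarMap G ω C v) =
      LinearMap.ker (codeRestrict C (ω ⁻¹' {v})) ⊓ ⨅ w : G.neighborSet v, edgeSub G ω C v w := by
  simp only [cStarMap, LinearMap.ker_prod, LinearMap.ker_pi, Submodule.ker_mkQ]
  rfl

variable [Fintype V]

theorem mem_edgeSub_of_forall_ne (hT : G.IsTree) {x : ↥C}
    (hx : x ∈ LinearMap.ker (codeRestrict C (ω ⁻¹' {v}))) (w : G.neighborSet v)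
    (hne : ∀ w' ≠ w, x ∈ edgeSub G ω C v w') : x ∈ edgeSub G ω C v w := by
  have hsum := sum_indicator_edgeIndexSet hT fun i hi => mem_ker_codeRestrict.mp hx i hi
  rw [← Finset.add_sum_erase _ _ (Finset.mem_univ w), ← eq_sub_iff_add_eq] at hsum
  rw [mem_edgeSub_iff, hsum]
  refine C.sub_mem x.2 (C.sum_mem fun w' hw' => mem_edgeSub_iff.mp (hne w' ?_))
  exact (Finset.mem_erase.mp hw').1

theorem ker_codeRestrict_inf_le_ker_cStarMap (hT : G.IsTree) (w : G.neighborSet v) :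
    LinearMap.ker (codeRestrict C (ω ⁻¹' {v})) ⊓
        (Finset.univ.erase w).inf (fun w' => edgeSub G ω C v w') ≤
      LinearMap.ker (cStarMap G ω C v) := by
  intro x hx
  obtain ⟨hx, hne⟩ := Submodule.mem_inf.mp hx
  have hne' : ∀ w' ≠ w, x ∈ edgeSub G ω C v w' := fun w' h =>
    Submodule.mem_finsetInf.mp hne w' (Finset.mem_erase.mpr ⟨h, Finset.mem_univ _⟩)
  have hall : ∀ w' : G.neighborSet v, x ∈ edgeSub G ω C v w' := fun w' => by
    by_cases hw : w' = w
    · exact hw ▸ mem_edgeSub_of_forall_ne hT hx w hne'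
    · exact hne' w' hw
  rw [ker_cStarMap]
  exact Submodule.mem_inf.mpr ⟨hx, Submodule.mem_iInf _ |>.mpr hall⟩

end Codes

/-- in the minimal tree realization, for every vertex `v` and every edge
`e = {v,w}` incident with `v`:
`dim S*_e ≤ dim C*_v ≤ dim C|_{ω⁻¹(v)} + ∑_{e' ∈ E(v), e' ≠ e} dim S*_{e'}`. -/
theorem cStar_dim_bounds (G : SimpleGraph V) (hT : G.IsTree) (ω : I → V)
    (C : Submodule F (I → F)) (v : V) (w : ↥(G.neighborSet v)) :
    finrank F (↥C ⧸ edgeSub G ω C v w.val) ≤ finrank F ↥(cStar G ω C v) ∧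
      finrank F ↥(cStar G ω C v) ≤
        finrank F ↥(projCode C (ω ⁻¹' {v})) +
          ∑ w' ∈ Finset.univ.erase w, finrank F (↥C ⧸ edgeSub G ω C v w'.val) := by
  have hcStar := finrank_cStar_add_finrank_ker_cStarMap G ω C v
  have hproj := (codeRestrict C (ω ⁻¹' {v})).finrank_range_add_finrank_ker
  rw [range_codeRestrict] at hproj
  constructor
  · have hker : LinearMap.ker (cStarMap G ω C v) ≤ edgeSub G ω C v w := by
      rw [ker_cStarMap]
      exact inf_le_right.trans (iInf_le _ w)
    have hker_le := Submodule.finrank_mono hker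
    have hquot := Submodule.finrank_quotient_add_finrank (edgeSub G ω C v w)
    omega
  · have hker_le :=
      Submodule.finrank_mono (ker_codeRestrict_inf_le_ker_cStarMap (ω := ω) (C := C) hT w)
    have hcodim := Submodule.finrank_le_finrank_inf_finsetInf_add_sum
      (LinearMap.ker (codeRestrict C (ω ⁻¹' {v}))) (Finset.univ.erase w)
      (fun w' => edgeSub G ω C v w')
    omega
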